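/- arXiv:1510.00619 — 5 statements merged into one kernel-verified Lean document; each statement's English description precedes it below -/
import Mathlib

section
/- If f: [-1,1] → [-1,1] is a C³ diffeomorphism fixing ±1 with negative Schwarzian derivative, and ν is an ergodic invariant measure for the driven skew product with fibre maps f_ω, then the sum of the normal Lyapunov exponents at the two constant invariant graphs is negative: λ_ν(φ⁻) + λ_ν(φ⁺) < 0. -/
open MeasureTheory Set

/-- Schwarzian derivative `Sf = f'''/f' - (3/2) (f''/f')²`. -/
noncomputable def schwarzian (f : ℝ → ℝ) (x : ℝ) : ℝ :=
  iteratedDeriv 3 f x / deriv f x - (3 / 2) * (iteratedDeriv 2 f x / deriv f x) ^ 2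

/-!
The statement holds fibrewise, before integrating. If `g' > 0`, then `v = (g')^{-1/2}` satisfies
`v'' = -(1/2) v Sg`, so negative Schwarzian makes `v` strictly convex and `v` lies below its chord
`L` on `[a, b]`. As `g' = v⁻²`, we get `g b - g a = ∫ v⁻² > ∫ L⁻² = (b - a) / (v a * v b)`,
that is `g'(a) g'(b) < ((g b - g a) / (b - a))²`. Fixing `±1` makes the right side `1`, so
`log g'(-1) + log g'(1) < 0` for every fibre map, and integrating against `ν` gives the claim.
-/

open Filter Topology

section Schwarzian

variable {g : ℝ → ℝ}

lemma schwarzian_eq_deriv (x : ℝ) :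
    schwarzian g x = deriv (deriv (deriv g)) x / deriv g x
      - 3 / 2 * (deriv (deriv g) x / deriv g x) ^ 2 := by
  simp only [schwarzian, iteratedDeriv_succ, iteratedDeriv_zero]

lemma deriv_deriv_rpow_neg_half (hg : ContDiff ℝ 3 g) {x : ℝ} (hx : 0 < deriv g x) :
    deriv (deriv fun y => deriv g y ^ (-(1 / 2) : ℝ)) x
      = -(1 / 2) * deriv g x ^ (-(1 / 2) : ℝ) * schwarzian g x := by
  have hd1 : ContDiff ℝ 2 (deriv g) := hg.deriv'
  have hd2 : ContDiff ℝ 1 (deriv (deriv g)) := hd1.deriv'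
  have hfirst : ∀ y, 0 < deriv g y → HasDerivAt (fun y => deriv g y ^ (-(1 / 2) : ℝ))
      (deriv (deriv g) y * (-(1 / 2)) * deriv g y ^ (-(1 / 2) - 1 : ℝ)) y := fun y hy =>
    ((hd1.differentiable (by norm_num)) y).hasDerivAt.rpow_const (Or.inl hy.ne')
  have hnear : deriv (fun y => deriv g y ^ (-(1 / 2) : ℝ)) =ᶠ[𝓝 x]
      fun y => deriv (deriv g) y * (-(1 / 2)) * deriv g y ^ (-(1 / 2) - 1 : ℝ) :=
    (hd1.continuous.continuousAt.eventually (Ioi_mem_nhds hx)).mono fun y hy => (hfirst y hy).deriv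
  have hsecond : HasDerivAt
      (fun y => deriv (deriv g) y * (-(1 / 2)) * deriv g y ^ (-(1 / 2) - 1 : ℝ)) _ x :=
    ((hd2.differentiable one_ne_zero x).hasDerivAt.mul_const (-(1 / 2) : ℝ)).mul
      ((hd1.differentiable (by norm_num) x).hasDerivAt.rpow_const (Or.inl hx.ne'))
  rw [hnear.deriv_eq, hsecond.deriv, schwarzian_eq_deriv, Real.rpow_sub_one hx.ne',
    Real.rpow_sub_one hx.ne', Real.rpow_sub_one hx.ne']
  field_simp
  ring

lemma strictConvexOn_deriv_rpow_neg_half {D : Set ℝ} (hD : Convex ℝ D) (hg : ContDiff ℝ 3 g)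
    (hpos : ∀ x ∈ D, 0 < deriv g x) (hS : ∀ x ∈ D, schwarzian g x < 0) :
    StrictConvexOn ℝ D fun x => deriv g x ^ (-(1 / 2) : ℝ) := by
  refine strictConvexOn_of_deriv2_pos' hD ?_ fun x hx => ?_
  · exact (hg.continuous_deriv (by norm_num)).continuousOn.rpow_const
      fun x hx => Or.inl (hpos x hx).ne'
  · rw [Function.iterate_succ_apply', Function.iterate_one,
      deriv_deriv_rpow_neg_half hg (hpos x hx)]
    have := Real.rpow_pos_of_pos (hpos x hx) (-(1 / 2))
    exact mul_pos_of_neg_of_neg (by linarith) (hS x hx)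

end Schwarzian

section Chord

noncomputable def chord (a b A B z : ℝ) : ℝ := ((b - z) * A + (z - a) * B) / (b - a)

variable {a b A B : ℝ}

lemma chord_right (hab : a < b) : chord a b A B b = B := by
  rw [chord]
  field_simp [sub_ne_zero.2 hab.ne']
  ring

lemma chord_pos (hab : a < b) (hA : 0 < A) (hB : 0 < B) {z : ℝ} (hz : z ∈ Icc a b) :
    0 < chord a b A B z := by
  refine div_pos ?_ (sub_pos.2 hab)
  rcases hz.2.lt_or_eq with hzb | rfl
  · nlinarith [mul_pos (sub_pos.2 hzb) hA, mul_nonneg (sub_nonneg.2 hz.1) hB.le]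
  · nlinarith [mul_pos (sub_pos.2 hab) hB]

lemma continuous_chord : Continuous (chord a b A B) := by
  unfold chord
  fun_prop

lemma hasDerivAt_chord (z : ℝ) : HasDerivAt (chord a b A B) ((B - A) / (b - a)) z := by
  have : HasDerivAt (chord a b A B) ((-1 * A + 1 * B) / (b - a)) z :=
    ((((hasDerivAt_id' z).const_sub b).mul_const A).add
      (((hasDerivAt_id' z).sub_const a).mul_const B)).div_const (b - a)
  exact this.congr_deriv (by ring)

lemma integral_inv_sq_chord (hab : a < b) (hA : 0 < A) (hB : 0 < B) :
    ∫ z in a..b, (chord a b A B z ^ 2)⁻¹ = (b - a) / (A * B) := by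
  have hL : ∀ z ∈ uIcc a b, chord a b A B z ≠ 0 := fun z hz =>
    (chord_pos hab hA hB (uIcc_of_le hab.le ▸ hz)).ne'
  -- `(z - a) / (A L(z))` is a primitive of `L⁻²` because `L(z) - (z - a) L'(z) = A`.
  have hprim : ∀ z ∈ uIcc a b, HasDerivAt (fun z => (z - a) / (A * chord a b A B z))
      (chord a b A B z ^ 2)⁻¹ z := by
    intro z hz
    have hkey : chord a b A B z - (z - a) * ((B - A) / (b - a)) = A := by
      unfold chord
      field_simp [sub_ne_zero.2 hab.ne']
      ring
    refine (((hasDerivAt_id' z).sub_const a).div ((hasDerivAt_chord z).const_mul A)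
      (mul_ne_zero hA.ne' (hL z hz))).congr_deriv ?_
    rw [show 1 * (A * chord a b A B z) - (z - a) * (A * ((B - A) / (b - a)))
      = A * (chord a b A B z - (z - a) * ((B - A) / (b - a))) by ring, hkey]
    field_simp
  have hcont : ContinuousOn (fun z => (chord a b A B z ^ 2)⁻¹) (uIcc a b) :=
    (continuous_chord.pow 2).continuousOn.inv₀ fun z hz => pow_ne_zero 2 (hL z hz)
  rw [intervalIntegral.integral_eq_sub_of_hasDerivAt hprim hcont.intervalIntegrable]
  simp only [sub_self, zero_div, sub_zero, chord_right hab]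

lemma StrictConvexOn.lt_chord {v : ℝ → ℝ} (hv : StrictConvexOn ℝ (Icc a b) v) {z : ℝ}
    (hz : z ∈ Ioo a b) : v z < chord a b (v a) (v b) z := by
  have hab : a < b := hz.1.trans hz.2
  have hba : 0 < b - a := sub_pos.2 hab
  have hmix := hv.2 (left_mem_Icc.2 hab.le) (right_mem_Icc.2 hab.le) hab.ne
    (div_pos (sub_pos.2 hz.2) hba) (div_pos (sub_pos.2 hz.1) hba) (by field_simp; ring)
  have hpt : ((b - z) / (b - a)) • a + ((z - a) / (b - a)) • b = z := by
    simp only [smul_eq_mul]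
    field_simp
    ring
  rw [hpt] at hmix
  refine hmix.trans_eq ?_
  simp only [smul_eq_mul, chord]
  ring

end Chord

lemma div_mul_lt_integral_inv_sq_of_strictConvexOn {v : ℝ → ℝ} {a b : ℝ} (hab : a < b)
    (hv : StrictConvexOn ℝ (Icc a b) v) (hvc : ContinuousOn v (Icc a b))
    (hpos : ∀ x ∈ Icc a b, 0 < v x) :
    (b - a) / (v a * v b) < ∫ x in a..b, (v x ^ 2)⁻¹ := by
  have ha := hpos a (left_mem_Icc.2 hab.le)
  have hb := hpos b (right_mem_Icc.2 hab.le)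
  have hlt : ∀ z ∈ Ioo a b, (chord a b (v a) (v b) z ^ 2)⁻¹ < (v z ^ 2)⁻¹ := fun z hz =>
    have hvz := hpos z (Ioo_subset_Icc_self hz)
    inv_strictAnti₀ (pow_pos hvz 2) (pow_lt_pow_left₀ (hv.lt_chord hz) hvz.le two_ne_zero)
  rw [← integral_inv_sq_chord hab ha hb]
  refine intervalIntegral.integral_lt_integral_of_continuousOn_of_le_of_exists_lt hab
    ((continuous_chord.pow 2).continuousOn.inv₀ fun z hz =>
      (pow_pos (chord_pos hab ha hb hz) 2).ne')
    ((hvc.pow 2).inv₀ fun z hz => (pow_pos (hpos z hz) 2).ne') (fun z hz => ?_)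
    ⟨(a + b) / 2, Ioo_subset_Icc_self ⟨by linarith, by linarith⟩,
      hlt _ ⟨by linarith, by linarith⟩⟩
  rcases hz.2.lt_or_eq with hzb | rfl
  · exact (hlt z ⟨hz.1, hzb⟩).le
  · rw [chord_right hab]

theorem deriv_mul_deriv_lt_slope_sq_of_schwarzian_neg {g : ℝ → ℝ} {a b : ℝ} (hab : a < b)
    (hg : ContDiff ℝ 3 g) (hpos : ∀ x ∈ Icc a b, 0 < deriv g x)
    (hS : ∀ x ∈ Icc a b, schwarzian g x < 0) :
    deriv g a * deriv g b < ((g b - g a) / (b - a)) ^ 2 := by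
  set v := fun x => deriv g x ^ (-(1 / 2) : ℝ) with hv
  have hvpos : ∀ x ∈ Icc a b, 0 < v x := fun x hx => Real.rpow_pos_of_pos (hpos x hx) _
  have hderiv_eq : ∀ x ∈ Icc a b, deriv g x = (v x ^ 2)⁻¹ := fun x hx => by
    rw [hv, ← Real.rpow_natCast, ← Real.rpow_mul (hpos x hx).le]
    norm_num [Real.rpow_neg_one]
  have hint : ∫ x in a..b, (v x ^ 2)⁻¹ = g b - g a := by
    rw [← intervalIntegral.integral_deriv_eq_sub (fun x _ => hg.differentiable (by norm_num) x)
      ((hg.continuous_deriv (by norm_num)).intervalIntegrable _ _)]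
    exact intervalIntegral.integral_congr fun x hx => (hderiv_eq x (uIcc_of_le hab.le ▸ hx)).symm
  have hcmp := div_mul_lt_integral_inv_sq_of_strictConvexOn hab
    (strictConvexOn_deriv_rpow_neg_half (convex_Icc a b) hg hpos hS)
    ((hg.continuous_deriv (by norm_num)).continuousOn.rpow_const
      fun x hx => Or.inl (hpos x hx).ne') hvpos
  rw [hint] at hcmp
  have ha := hvpos a (left_mem_Icc.2 hab.le)
  have hb := hvpos b (right_mem_Icc.2 hab.le)
  have hroot : 1 / (v a * v b) < (g b - g a) / (b - a) := by
    rw [lt_div_iff₀ (sub_pos.2 hab)]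
    calc 1 / (v a * v b) * (b - a) = (b - a) / (v a * v b) := by ring
      _ < g b - g a := hcmp
  calc deriv g a * deriv g b = (1 / (v a * v b)) ^ 2 := by
        rw [hderiv_eq a (left_mem_Icc.2 hab.le), hderiv_eq b (right_mem_Icc.2 hab.le)]
        field_simp
    _ < ((g b - g a) / (b - a)) ^ 2 := pow_lt_pow_left₀ hroot (by positivity) two_ne_zero

lemma log_deriv_neg_one_add_log_deriv_one_neg {g : ℝ → ℝ} (hg : ContDiff ℝ 3 g)
    (hgm : g (-1) = -1) (hgp : g 1 = 1) (hpos : ∀ x ∈ Icc (-1 : ℝ) 1, 0 < deriv g x)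
    (hS : ∀ x ∈ Icc (-1 : ℝ) 1, schwarzian g x < 0) :
    Real.log (deriv g (-1)) + Real.log (deriv g 1) < 0 := by
  have hprod := deriv_mul_deriv_lt_slope_sq_of_schwarzian_neg (by norm_num) hg hpos hS
  rw [hgm, hgp] at hprod
  norm_num at hprod
  rw [← Real.log_mul (hpos _ (by norm_num)).ne' (hpos _ (by norm_num)).ne']
  exact Real.log_neg (mul_pos (hpos _ (by norm_num)) (hpos _ (by norm_num))) hprod

lemma MeasureTheory.integral_neg_of_forall_neg {α : Type*} [MeasurableSpace α] {μ : Measure α}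
    [NeZero μ] {h : α → ℝ} (hi : Integrable h μ) (hneg : ∀ x, h x < 0) :
    ∫ x, h x ∂μ < 0 := by
  have hsupp : Function.support (fun x => -h x) = univ :=
    eq_univ_of_forall fun x => (neg_pos.2 (hneg x)).ne'
  have : 0 < ∫ x, -h x ∂μ := by
    rw [integral_pos_iff_support_of_nonneg (fun x => (neg_pos.2 (hneg x)).le) hi.neg, hsupp]
    simp [NeZero.ne μ]
  rwa [integral_neg, neg_pos] at this

theorem stmt0_general {Ω : Type*} [MeasurableSpace Ω] (ν : Measure Ω)
    [IsProbabilityMeasure ν]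
    (f : Ω → ℝ → ℝ)
    (hC3 : ∀ ω, ContDiff ℝ 3 (f ω))
    (hfixm : ∀ ω, f ω (-1) = -1) (hfixp : ∀ ω, f ω 1 = 1)
    (hderiv : ∀ ω, ∀ x ∈ Icc (-1 : ℝ) 1, 0 < deriv (f ω) x)
    (hSchw : ∀ ω, ∀ x ∈ Icc (-1 : ℝ) 1, schwarzian (f ω) x < 0)
    (hintm : Integrable (fun ω => Real.log (deriv (f ω) (-1))) ν)
    (hintp : Integrable (fun ω => Real.log (deriv (f ω) 1)) ν) :
    (∫ ω, Real.log (deriv (f ω) (-1)) ∂ν) + (∫ ω, Real.log (deriv (f ω) 1) ∂ν) < 0 := by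
  rw [← integral_add hintm hintp]
  exact integral_neg_of_forall_neg (hintm.add hintp) fun ω =>
    log_deriv_neg_one_add_log_deriv_one_neg (hC3 ω) (hfixm ω) (hfixp ω) (hderiv ω) (hSchw ω)

/-- If each fibre map `f ω` is a C³ diffeomorphism of `[-1,1]` fixing `±1` with negative
Schwarzian derivative, and `ν` is an ergodic `S`-invariant probability measure, then
`λ_ν(φ⁻) + λ_ν(φ⁺) < 0`. -/
theorem stmt0 {Ω : Type*} [MeasurableSpace Ω] (S : Ω → Ω) (ν : Measure Ω)
    [IsProbabilityMeasure ν] (hS : Ergodic S ν)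
    (f : Ω → ℝ → ℝ)
    (hmeas : Measurable fun p : Ω × ℝ => f p.1 p.2)
    (hC3 : ∀ ω, ContDiff ℝ 3 (f ω))
    (hmono : ∀ ω, StrictMonoOn (f ω) (Icc (-1) 1))
    (hbij : ∀ ω, BijOn (f ω) (Icc (-1) 1) (Icc (-1) 1))
    (hfixm : ∀ ω, f ω (-1) = -1) (hfixp : ∀ ω, f ω 1 = 1)
    (hderiv : ∀ ω, ∀ x ∈ Icc (-1 : ℝ) 1, 0 < deriv (f ω) x)
    (hSchw : ∀ ω, ∀ x ∈ Icc (-1 : ℝ) 1, schwarzian (f ω) x < 0)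
    (hintm : Integrable (fun ω => Real.log (deriv (f ω) (-1))) ν)
    (hintp : Integrable (fun ω => Real.log (deriv (f ω) 1)) ν) :
    (∫ ω, Real.log (deriv (f ω) (-1)) ∂ν) + (∫ ω, Real.log (deriv (f ω) 1) ∂ν) < 0 :=
  stmt0_general ν f hC3 hfixm hfixp hderiv hSchw hintm hintp
end

section
/- Let f: [-1,1] → [-1,1] be an increasing diffeomorphism fixing ±1 with negative Schwarzian derivative. Then for all z ∈ (-1,1): (f(z) − (−1))/(z − (−1)) ≥ ((1 − f(z))/(1 − z)) · f'(−1). Consequently f(z) + 1 ≥ min{1, f'(−1)·(z+1)/(1−z)}. -/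
/-!
Let `c = f'(-1)`, `s = (c - 1)/(c + 1)` and `g = M_s ∘ f` with `M_s t = (t - s)/(1 - s t)`, so
that `g` fixes `±1` and `g'(-1) = 1`. Writing `U = (1 - s f)/√f'`, one has `g' = (1 - s²)/U²` and
`U'' = -(1/2) (1 - s f) Sf / √f' ≥ 0`, so `U` is convex and `g'` is quasiconcave. If `g z < z`,
the mean value theorem gives `ξ ∈ (-1, z)` and `η ∈ (z, 1)` with `g' ξ < 1 < g' η`, contradicting
`g' ξ ≥ min (g' (-1)) (g' η) = 1`. Unwinding `z ≤ g z` gives the first inequality; the second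
follows from it by elementary algebra.
-/

open Set

lemma ContDiff.hasDerivAt_iteratedDeriv {f : ℝ → ℝ} {n : WithTop ℕ∞} (hf : ContDiff ℝ n f)
    {m : ℕ} (hm : (m : WithTop ℕ∞) < n) (x : ℝ) :
    HasDerivAt (iteratedDeriv m f) (iteratedDeriv (m + 1) f x) x := by
  rw [iteratedDeriv_succ]
  exact (hf.differentiable_iteratedDeriv m hm x).hasDerivAt

lemma QuasiconvexOn.quasiconcaveOn_div_sq {D : Set ℝ} {U : ℝ → ℝ} (hU : QuasiconvexOn ℝ D U)
    (hpos : ∀ x ∈ D, 0 < U x) {k : ℝ} (hk : 0 ≤ k) :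
    QuasiconcaveOn ℝ D (fun x => k / U x ^ 2) := by
  rw [quasiconvexOn_iff_le_max] at hU
  refine quasiconcaveOn_iff_min_le.2 ⟨hU.1, fun x hx y hy a b ha hb hab => ?_⟩
  have hmem := hU.1 hx hy ha hb hab
  have hmax := hU.2 hx hy ha hb hab
  have hanti : ∀ w, U (a • x + b • y) ≤ U w → k / U w ^ 2 ≤ k / U (a • x + b • y) ^ 2 :=
    fun w hw => div_le_div_of_nonneg_left hk (pow_pos (hpos _ hmem) 2)
      (pow_le_pow_left₀ (hpos _ hmem).le hw 2)
  rcases le_total (U x) (U y) with h | h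
  · exact (min_le_right _ _).trans (hanti y (max_eq_right h ▸ hmax))
  · exact (min_le_left _ _).trans (hanti x (max_eq_left h ▸ hmax))

theorem min_deriv_slope_le_slope_of_quasiconcaveOn {g g' : ℝ → ℝ} {a z b : ℝ} (haz : a < z)
    (hzb : z < b) (hg : ∀ x ∈ Icc a b, HasDerivAt g (g' x) x)
    (hq : QuasiconcaveOn ℝ (Icc a b) g') :
    min (g' a) ((g b - g z) / (b - z)) ≤ (g z - g a) / (z - a) := by
  have hcont : ContinuousOn g (Icc a b) := fun x hx => (hg x hx).continuousAt.continuousWithinAt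
  obtain ⟨η, hη, hη_slope⟩ := exists_hasDerivAt_eq_slope g g' hzb
    (hcont.mono (Icc_subset_Icc haz.le le_rfl)) fun x hx => hg x ⟨haz.le.trans hx.1.le, hx.2.le⟩
  obtain ⟨ξ, hξ, hξ_slope⟩ := exists_hasDerivAt_eq_slope g g' haz
    (hcont.mono (Icc_subset_Icc le_rfl hzb.le)) fun x hx => hg x ⟨hx.1.le, hx.2.le.trans hzb.le⟩
  have hξη : ξ ∈ segment ℝ a η := by
    rw [segment_eq_Icc (haz.trans hη.1).le]
    exact ⟨hξ.1.le, (hξ.2.trans hη.1).le⟩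
  rw [← hη_slope, ← hξ_slope]
  exact ((hq _).segment_subset ⟨left_mem_Icc.2 (haz.trans hzb).le, min_le_left _ _⟩
    ⟨⟨(haz.trans hη.1).le, hη.2.le⟩, min_le_right _ _⟩ hξη).2

theorem le_apply_of_quasiconcaveOn_deriv {g g' : ℝ → ℝ} {a b z : ℝ} (hz : z ∈ Ioo a b)
    (hg : ∀ x ∈ Icc a b, HasDerivAt g (g' x) x) (hq : QuasiconcaveOn ℝ (Icc a b) g')
    (ha : g a = a) (hb : g b = b) (hg'a : g' a = 1) : z ≤ g z := by
  by_contra! hlt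
  have hmin := min_deriv_slope_le_slope_of_quasiconcaveOn hz.1 hz.2 hg hq
  have hright : 1 ≤ (g b - g z) / (b - z) := by
    rw [one_le_div (sub_pos.2 hz.2), hb]
    linarith
  rw [hg'a, min_eq_left hright, ha, one_le_div (sub_pos.2 hz.1)] at hmin
  linarith

noncomputable def intervalMobius (s t : ℝ) : ℝ := (t - s) / (1 - s * t)

lemma intervalMobius_one {s : ℝ} (hs : s ≠ 1) : intervalMobius s 1 = 1 := by
  rw [intervalMobius, mul_one, div_self (sub_ne_zero.2 hs.symm)]

lemma intervalMobius_neg_one {s : ℝ} (hs : s ≠ -1) : intervalMobius s (-1) = -1 := by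
  rw [intervalMobius, div_eq_iff (by contrapose! hs; linarith)]
  ring

lemma sub_one_div_add_one_mem_Ioo {c : ℝ} (hc : 0 < c) : (c - 1) / (c + 1) ∈ Ioo (-1 : ℝ) 1 :=
  ⟨by rw [lt_div_iff₀ (by linarith)]; linarith, by rw [div_lt_one (by linarith)]; linarith⟩

lemma one_sub_mul_pos_of_mem_Ioo_of_mem_Icc {s y : ℝ} (hs : s ∈ Ioo (-1 : ℝ) 1)
    (hy : y ∈ Icc (-1 : ℝ) 1) : 0 < 1 - s * y := by
  have hsy : |s * y| < 1 := by
    rw [abs_mul]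
    exact mul_lt_one_of_nonneg_of_lt_one_left (abs_nonneg _) (abs_lt.2 hs) (abs_le.2 hy)
  linarith [le_abs_self (s * y)]

/-- Up to the constant `√(1 - s²)`, this is `(g')^(-1/2)` for `g = intervalMobius s ∘ f`. -/
noncomputable def koebeWeight (f : ℝ → ℝ) (s y : ℝ) : ℝ := (1 - s * f y) / √(deriv f y)

section KoebeWeight

variable {f : ℝ → ℝ} (s : ℝ)

lemma hasDerivAt_koebeWeight (hf : ContDiff ℝ 3 f) {x : ℝ} (hx : 0 < deriv f x) :
    HasDerivAt (koebeWeight f s)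
      (-s * √(deriv f x) - (1 - s * f x) * iteratedDeriv 2 f x / (2 * deriv f x * √(deriv f x)))
      x := by
  have hf₀ : HasDerivAt f (deriv f x) x := by
    simpa using hf.hasDerivAt_iteratedDeriv (m := 0) (by norm_num) x
  have hf₁ : HasDerivAt (deriv f) (iteratedDeriv 2 f x) x := by
    simpa using hf.hasDerivAt_iteratedDeriv (m := 1) (by norm_num) x
  refine (((hf₀.const_mul s).const_sub 1).div (hf₁.sqrt hx.ne')
    (Real.sqrt_pos.mpr hx).ne').congr_deriv ?_
  obtain ⟨w, hw, hww⟩ : ∃ w, 0 < w ∧ √(deriv f x) = w := ⟨_, Real.sqrt_pos.mpr hx, rfl⟩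
  have hp : deriv f x = w ^ 2 := by rw [← hww, Real.sq_sqrt hx.le]
  rw [hww, hp]
  field_simp

lemma hasDerivAt_deriv_koebeWeight (hf : ContDiff ℝ 3 f) {x : ℝ} (hx : 0 < deriv f x) :
    HasDerivAt (fun y => -s * √(deriv f y) -
        (1 - s * f y) * iteratedDeriv 2 f y / (2 * deriv f y * √(deriv f y)))
      (-(1 - s * f x) * schwarzian f x / (2 * √(deriv f x))) x := by
  have hf₀ : HasDerivAt f (deriv f x) x := by
    simpa using hf.hasDerivAt_iteratedDeriv (m := 0) (by norm_num) x
  have hf₁ : HasDerivAt (deriv f) (iteratedDeriv 2 f x) x := by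
    simpa using hf.hasDerivAt_iteratedDeriv (m := 1) (by norm_num) x
  have hf₂ : HasDerivAt (iteratedDeriv 2 f) (iteratedDeriv 3 f x) x :=
    hf.hasDerivAt_iteratedDeriv (m := 2) (by norm_num) x
  have hsqrt := hf₁.sqrt hx.ne'
  have hw : 0 < √(deriv f x) := Real.sqrt_pos.mpr hx
  refine ((hsqrt.const_mul (-s)).sub ((((hf₀.const_mul s).const_sub 1).mul hf₂).div
    ((hf₁.const_mul 2).mul hsqrt) (mul_pos (mul_pos two_pos hx) hw).ne')).congr_deriv ?_
  simp only [schwarzian, Pi.mul_apply]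
  obtain ⟨w, hw, hww⟩ : ∃ w, 0 < w ∧ √(deriv f x) = w := ⟨_, hw, rfl⟩
  have hp : deriv f x = w ^ 2 := by rw [← hww, Real.sq_sqrt hx.le]
  rw [hww, hp]
  field_simp
  ring

theorem convexOn_koebeWeight {D : Set ℝ} (hD : Convex ℝ D) (hf : ContDiff ℝ 3 f)
    (hf' : ∀ x ∈ D, 0 < deriv f x) (hS : ∀ x ∈ D, schwarzian f x ≤ 0)
    (hs : ∀ x ∈ D, 0 ≤ 1 - s * f x) : ConvexOn ℝ D (koebeWeight f s) := by
  refine convexOn_of_hasDerivWithinAt2_nonneg hD ?_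
    (fun x hx => (hasDerivAt_koebeWeight s hf (hf' x (interior_subset hx))).hasDerivWithinAt)
    (fun x hx => (hasDerivAt_deriv_koebeWeight s hf (hf' x (interior_subset hx))).hasDerivWithinAt)
    fun x hx => ?_
  · exact (continuous_const.sub (continuous_const.mul hf.continuous)).continuousOn.div
      (hf.continuous_deriv (by norm_num)).continuousOn.sqrt
      fun x hx => (Real.sqrt_pos.2 (hf' x hx)).ne'
  · have hx := interior_subset hx
    have hSx := hS x hx
    have hsx := hs x hx
    exact div_nonneg (by nlinarith) (by positivity)

lemma hasDerivAt_intervalMobius_comp {x : ℝ} (hfx : DifferentiableAt ℝ f x)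
    (hx : 0 < deriv f x) (hsx : 1 - s * f x ≠ 0) :
    HasDerivAt (fun y => intervalMobius s (f y)) ((1 - s ^ 2) / koebeWeight f s x ^ 2) x := by
  refine ((hfx.hasDerivAt.sub_const s).div ((hfx.hasDerivAt.const_mul s).const_sub 1)
    hsx).congr_deriv ?_
  rw [koebeWeight, div_pow, Real.sq_sqrt hx.le]
  field_simp
  ring

lemma one_sub_sq_div_koebeWeight_sq_neg_one (hfm : f (-1) = -1) (hc : 0 < deriv f (-1)) :
    (1 - ((deriv f (-1) - 1) / (deriv f (-1) + 1)) ^ 2) /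
      koebeWeight f ((deriv f (-1) - 1) / (deriv f (-1) + 1)) (-1) ^ 2 = 1 := by
  set c := deriv f (-1) with hc_def
  set s := (c - 1) / (c + 1) with hs_def
  have hs₁ : (1 + s) ^ 2 ≠ 0 := pow_ne_zero 2 (by linarith [(sub_one_div_add_one_mem_Ioo hc).1])
  rw [koebeWeight, ← hc_def, div_pow _ √c, Real.sq_sqrt hc.le, hfm, mul_neg_one,
    sub_neg_eq_add, div_div_eq_mul_div, div_eq_one_iff_eq hs₁, hs_def]
  have : c + 1 ≠ 0 := by positivity
  field_simp
  ring

end KoebeWeight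

lemma slope_ge_of_le_intervalMobius {c y z : ℝ} (hc : 0 < c) (hz : z ∈ Ioo (-1 : ℝ) 1)
    (hy : 0 < 1 - (c - 1) / (c + 1) * y) (h : z ≤ intervalMobius ((c - 1) / (c + 1)) y) :
    (1 - y) / (1 - z) * c ≤ (y + 1) / (z + 1) := by
  have hc₁ : 0 < c + 1 := by linarith
  rw [intervalMobius, le_div_iff₀ hy] at h
  rw [div_mul_eq_mul_div, div_le_div_iff₀ (by linarith [hz.2]) (by linarith [hz.1])]
  field_simp at h
  nlinarith

lemma min_le_add_one_of_slope_ge {c y z : ℝ} (hc : 0 ≤ c) (hz : z ∈ Ioo (-1 : ℝ) 1)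
    (h : (1 - y) / (1 - z) * c ≤ (y + 1) / (z + 1)) :
    min 1 (c * (z + 1) / (1 - z)) ≤ y + 1 := by
  have hz₁ : 0 < z + 1 := by linarith [hz.1]
  have hz₂ : 0 < 1 - z := by linarith [hz.2]
  set t := c * (z + 1) / (1 - z) with ht
  have ht₀ : 0 ≤ t := by positivity
  have key : 2 * t ≤ (y + 1) * (1 + t) := by
    have : (1 - y) * t ≤ y + 1 := by
      rw [ht, ← mul_div_assoc, div_le_iff₀ hz₂]
      rw [div_mul_eq_mul_div, div_le_div_iff₀ hz₂ hz₁] at h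
      linarith
    linarith
  rcases le_total t 1 with h₁ | h₁
  · rw [min_eq_right h₁]
    nlinarith
  · rw [min_eq_left h₁]
    nlinarith

theorem stmt2_general (f : ℝ → ℝ) (hC3 : ContDiff ℝ 3 f)
    (hfixm : f (-1) = -1) (hfixp : f 1 = 1)
    (hderiv : ∀ x ∈ Icc (-1 : ℝ) 1, 0 < deriv f x)
    (hSchw : ∀ x ∈ Icc (-1 : ℝ) 1, schwarzian f x < 0) :
    ∀ z ∈ Ioo (-1 : ℝ) 1,
      (f z - (-1)) / (z - (-1)) ≥ (1 - f z) / (1 - z) * deriv f (-1) ∧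
      f z + 1 ≥ min 1 (deriv f (-1) * (z + 1) / (1 - z)) := by
  intro z hz
  have hc : 0 < deriv f (-1) := hderiv _ (left_mem_Icc.2 (by norm_num))
  set s := (deriv f (-1) - 1) / (deriv f (-1) + 1)
  have hs : s ∈ Ioo (-1 : ℝ) 1 := sub_one_div_add_one_mem_Ioo hc
  have hmaps : MapsTo f (Icc (-1) 1) (Icc (-1) 1) := by
    simpa only [hfixm, hfixp] using (strictMonoOn_of_deriv_pos (convex_Icc _ _)
      hC3.continuous.continuousOn fun x hx => hderiv x (interior_subset hx)).monotoneOn.mapsTo_Icc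
  have hpos : ∀ x ∈ Icc (-1 : ℝ) 1, 0 < 1 - s * f x :=
    fun x hx => one_sub_mul_pos_of_mem_Ioo_of_mem_Icc hs (hmaps hx)
  have hq : QuasiconcaveOn ℝ (Icc (-1) 1) (fun x => (1 - s ^ 2) / koebeWeight f s x ^ 2) :=
    (convexOn_koebeWeight s (convex_Icc _ _) hC3 hderiv (fun x hx => (hSchw x hx).le)
      fun x hx => (hpos x hx).le).quasiconvexOn.quasiconcaveOn_div_sq
      (fun x hx => div_pos (hpos x hx) (Real.sqrt_pos.2 (hderiv x hx)))
      (by nlinarith [hs.1, hs.2])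
  have hz_le : z ≤ intervalMobius s (f z) :=
    le_apply_of_quasiconcaveOn_deriv hz (fun x hx => hasDerivAt_intervalMobius_comp s
        (hC3.differentiable (by norm_num) x) (hderiv x hx) (hpos x hx).ne') hq
      (by rw [hfixm, intervalMobius_neg_one hs.1.ne']) (by rw [hfixp, intervalMobius_one hs.2.ne])
      (one_sub_sq_div_koebeWeight_sq_neg_one hfixm hc)
  have hslope := slope_ge_of_le_intervalMobius hc hz (hpos z ⟨hz.1.le, hz.2.le⟩) hz_le
  rw [sub_neg_eq_add, sub_neg_eq_add]
  exact ⟨hslope, min_le_add_one_of_slope_ge hc.le hz hslope⟩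

/-- One-sided Koebe principle: for an increasing diffeomorphism of `[-1,1]` fixing the
endpoints with negative Schwarzian derivative,
`(f z + 1)/(z + 1) ≥ ((1 - f z)/(1 - z))·f'(-1)` on `(-1,1)`, and consequently
`f z + 1 ≥ min {1, f'(-1)·(z+1)/(1-z)}`. -/
theorem stmt2 (f : ℝ → ℝ) (hC3 : ContDiff ℝ 3 f)
    (hmono : StrictMonoOn f (Icc (-1) 1))
    (hbij : BijOn f (Icc (-1) 1) (Icc (-1) 1))
    (hfixm : f (-1) = -1) (hfixp : f 1 = 1)
    (hderiv : ∀ x ∈ Icc (-1 : ℝ) 1, 0 < deriv f x)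
    (hSchw : ∀ x ∈ Icc (-1 : ℝ) 1, schwarzian f x < 0) :
    ∀ z ∈ Ioo (-1 : ℝ) 1,
      (f z - (-1)) / (z - (-1)) ≥ (1 - f z) / (1 - z) * deriv f (-1) ∧
      f z + 1 ≥ min 1 (deriv f (-1) * (z + 1) / (1 - z)) :=
  stmt2_general f hC3 hfixm hfixp hderiv hSchw
end

section
/- Let ψ: ℝ³ → ℝ be convex differentiable, λ_* ∈ ℝ³ with ψ(λ_*) = 0, y_* > 0, and set (x⁻_*, x⁺_*, 1) = y_*·Dψ(λ_*). Suppose t⁻x⁻_* = t⁺x⁺_* = z_* < 0 and λ_* = (ℓ(u_*), h(u_*)) with ℓ(u) = ((1−u)t⁻/2, (1+u)t⁺/2). Then sup_{λ∈ℝ³} (⟨λ, (x⁻_*, x⁺_*, 1)⟩ − y_*·ψ(λ) − min{t⁻x⁻_*, t⁺x⁺_*, 0}) = h(u_*). -/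
open Set

/- The conjugate value `sup_λ (⟨λ, x⟩ − y ψ(λ))` with `x = y Dψ(λ_*)` is attained at `λ_*`, by the
tangent-plane inequality for the convex function `ψ`. At `λ_*` we have `ψ(λ_*) = 0`, and
`t⁻x⁻_* = t⁺x⁺_* = z_*` makes `⟨ℓ(u_*), (x⁻_*, x⁺_*)⟩ = ((1 − u_*)/2 + (1 + u_*)/2) z_* = z_*`,
which cancels against `min {z_*, z_*, 0} = z_*`, leaving `h(u_*)`. -/

theorem ConvexOn.add_fderiv_sub_le {E : Type*} [NormedAddCommGroup E] [NormedSpace ℝ E]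
    {S : Set E} {ψ : E → ℝ} (hconv : ConvexOn ℝ S ψ) {a b : E} (ha : a ∈ S) (hb : b ∈ S)
    (hdiff : DifferentiableAt ℝ ψ a) : ψ a + fderiv ℝ ψ a (b - a) ≤ ψ b := by
  let line : ℝ →ᵃ[ℝ] E :=
    AffineMap.const ℝ ℝ a + (LinearMap.toSpanSingleton ℝ E (b - a)).toAffineMap
  have hline : ∀ t : ℝ, line t = a + t • (b - a) := fun _ => rfl
  have hconv_line : ConvexOn ℝ (line ⁻¹' S) (ψ ∘ line) := hconv.comp_affineMap line
  have hderiv : HasDerivAt (ψ ∘ line) (fderiv ℝ ψ a (b - a)) 0 := by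
    have hline_deriv : HasDerivAt line (b - a) 0 := by
      rw [show ⇑line = fun t : ℝ => a + t • (b - a) from funext hline]
      simpa using ((hasDerivAt_id (0 : ℝ)).smul_const (b - a)).const_add a
    have hψ : HasFDerivAt ψ (fderiv ℝ ψ a) (line 0) := by
      simpa [hline] using hdiff.hasFDerivAt
    exact hψ.comp_hasDerivAt 0 hline_deriv
  have hslope := hconv_line.le_slope_of_hasDerivAt (by simpa [hline] using ha)
    (by simpa [hline] using hb) one_pos hderiv
  simp only [slope, Function.comp_apply, hline, one_smul, zero_smul, add_zero, add_sub_cancel,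
    vsub_eq_sub, sub_zero, inv_one, smul_eq_mul, one_mul] at hslope
  linarith

theorem ConvexOn.isGreatest_range_smul_fderiv_sub {E : Type*} [NormedAddCommGroup E]
    [NormedSpace ℝ E] {ψ : E → ℝ} (hconv : ConvexOn ℝ univ ψ) {a : E}
    (hdiff : DifferentiableAt ℝ ψ a) {y : ℝ} (hy : 0 ≤ y) :
    IsGreatest (range fun b => y * fderiv ℝ ψ a b - y * ψ b)
      (y * fderiv ℝ ψ a a - y * ψ a) := by
  refine ⟨⟨a, rfl⟩, ?_⟩
  rintro _ ⟨b, rfl⟩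
  have htangent := hconv.add_fderiv_sub_le (mem_univ a) (mem_univ b) hdiff
  rw [map_sub] at htangent
  linarith [mul_le_mul_of_nonneg_left htangent hy]

theorem stmt12_general (ψ : ℝ × ℝ × ℝ → ℝ) (hconv : ConvexOn ℝ univ ψ)
    (hdiff : Differentiable ℝ ψ)
    (tm tp : ℝ)
    (ustar hstar ystar xm xp zstar : ℝ) (hy : 0 < ystar)
    (lamstar : ℝ × ℝ × ℝ)
    (hlam : lamstar = ((1 - ustar) * tm / 2, (1 + ustar) * tp / 2, hstar))
    (hψ0 : ψ lamstar = 0)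
    (hgrad : ∀ v : ℝ × ℝ × ℝ,
      ystar * fderiv ℝ ψ lamstar v = xm * v.1 + xp * v.2.1 + v.2.2)
    (hzm : tm * xm = zstar) (hzp : tp * xp = zstar) (hz : zstar < 0) :
    IsGreatest (Set.range fun lam : ℝ × ℝ × ℝ =>
      lam.1 * xm + lam.2.1 * xp + lam.2.2 - ystar * ψ lam -
        min (min (tm * xm) (tp * xp)) 0) hstar := by
  have hmin : min (min (tm * xm) (tp * xp)) 0 = zstar := by
    rw [hzm, hzp, min_self, min_eq_left hz.le]
  have hshift : (fun lam : ℝ × ℝ × ℝ =>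
      lam.1 * xm + lam.2.1 * xp + lam.2.2 - ystar * ψ lam - min (min (tm * xm) (tp * xp)) 0) =
      (· - zstar) ∘ fun lam => ystar * fderiv ℝ ψ lamstar lam - ystar * ψ lam := by
    funext lam
    rw [Function.comp_apply, hgrad, hmin]
    ring
  have hvalue : ystar * fderiv ℝ ψ lamstar lamstar - ystar * ψ lamstar - zstar = hstar := by
    rw [hgrad, hψ0, hlam]
    linear_combination (1 - ustar) / 2 * hzm + (1 + ustar) / 2 * hzp
  rw [hshift, range_comp, ← hvalue]
  have hmono : Monotone (· - zstar) := fun _ _ h => sub_le_sub_right h zstar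
  exact hmono.map_isGreatest (hconv.isGreatest_range_smul_fderiv_sub (hdiff lamstar) hy.le)

/-- Upper-bound computation in the evaluation of the uncertainty exponent: for convex
differentiable `ψ` with `ψ(λ_*) = 0`, `y_*·Dψ(λ_*) = (x⁻_*, x⁺_*, 1)` and
`t⁻x⁻_* = t⁺x⁺_* = z_* < 0`, the supremum over `λ ∈ ℝ³` of
`⟨λ,(x⁻_*,x⁺_*,1)⟩ − y_*ψ(λ) − min{t⁻x⁻_*, t⁺x⁺_*, 0}` equals `h(u_*)`, the third
coordinate of `λ_* = (ℓ(u_*), h(u_*))`. -/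
theorem stmt12 (ψ : ℝ × ℝ × ℝ → ℝ) (hconv : ConvexOn ℝ univ ψ)
    (hdiff : Differentiable ℝ ψ)
    (tm tp : ℝ) (htm : 0 < tm) (htp : 0 < tp)
    (ustar hstar ystar xm xp zstar : ℝ) (hy : 0 < ystar)
    (lamstar : ℝ × ℝ × ℝ)
    (hlam : lamstar = ((1 - ustar) * tm / 2, (1 + ustar) * tp / 2, hstar))
    (hψ0 : ψ lamstar = 0)
    (hgrad : ∀ v : ℝ × ℝ × ℝ,
      ystar * fderiv ℝ ψ lamstar v = xm * v.1 + xp * v.2.1 + v.2.2)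
    (hzm : tm * xm = zstar) (hzp : tp * xp = zstar) (hz : zstar < 0) :
    IsGreatest (Set.range fun lam : ℝ × ℝ × ℝ =>
      lam.1 * xm + lam.2.1 * xp + lam.2.2 - ystar * ψ lam -
        min (min (tm * xm) (tp * xp)) 0) hstar :=
  stmt12_general ψ hconv hdiff tm tp ustar hstar ystar xm xp zstar hy lamstar hlam hψ0 hgrad hzm hzp
    hz
end

section
/- Let Φ: (0,∞) → (0,1] be nondecreasing with lim_{u→0} log Φ(u)/log u = t_* > 0, let c ∈ ℝ, κ > 0, and define ζ_ε(z) = min{0, z − c/|log ε|} + log κ/|log ε| and H⁻(z) = min{t_* z, 0}. Then for every C > 0: lim_{ε→0} sup_{z ≥ −C} | (1/|log ε|)·log Φ(ε^{−ζ_ε(z)}) − H⁻(z) | = 0. -/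
/-!
Put `ψ(s) = -log Φ(κ e^{-s})` and `L = |log ε|`. Then `ψ` is nondecreasing with `ψ(s)/s → t_*`,
and the quantity in question is `-ψ(max(0, c - L z))/L`. Monotonicity of `ψ` upgrades
`ψ(s) = t_* s + o(s)` to `|ψ(s) - t_* s| ≤ ρ s + K` on all of `[0, ∞)`; since `max(0, c - L z)`
is within `|c|` of `L max(0, -z)`, dividing by `L` gives convergence to `t_* max(0, -z) = -H⁻(z)`,
uniformly on `z ≥ -C`.
-/

open Set Filter Real Topology

lemma exists_abs_sub_mul_le_of_tendsto_div {ψ : ℝ → ℝ} {t ρ : ℝ}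
    (hmono : MonotoneOn ψ (Ici 0)) (hlim : Tendsto (fun s => ψ s / s) atTop (𝓝 t))
    (hρ : 0 < ρ) : ∃ K, ∀ s, 0 ≤ s → |ψ s - t * s| ≤ ρ * s + K := by
  obtain ⟨S, hS⟩ := eventually_atTop.mp
    ((eventually_gt_atTop 0).and (Metric.tendsto_nhds.mp hlim ρ hρ))
  have hS0 : 0 < S := (hS S le_rfl).1
  have hK : 0 ≤ |ψ 0| + |ψ S| + |t| * S := by positivity
  refine ⟨|ψ 0| + |ψ S| + |t| * S, fun s hs => ?_⟩
  rcases le_or_gt S s with hSs | hsS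
  · obtain ⟨hs0, hclose⟩ := hS s hSs
    calc |ψ s - t * s| = |ψ s / s - t| * s := by
          rw [← abs_of_pos hs0, ← abs_mul, abs_of_pos hs0, sub_mul, div_mul_cancel₀ _ hs0.ne']
      _ ≤ ρ * s := mul_le_mul_of_nonneg_right hclose.le hs
      _ ≤ ρ * s + (|ψ 0| + |ψ S| + |t| * S) := le_add_of_nonneg_right hK
  · have hlow : ψ 0 ≤ ψ s := hmono (mem_Ici.mpr le_rfl) hs hs
    have hup : ψ s ≤ ψ S := hmono hs hS0.le hsS.le
    have hts : |t * s| ≤ |t| * S := by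
      rw [abs_mul, abs_of_nonneg hs]
      exact mul_le_mul_of_nonneg_left hsS.le (abs_nonneg t)
    have hψs : |ψ s| ≤ |ψ 0| + |ψ S| := by
      rw [abs_le]; constructor <;> linarith [neg_abs_le (ψ 0), le_abs_self (ψ S), abs_nonneg (ψ 0),
        abs_nonneg (ψ S)]
    calc |ψ s - t * s| ≤ |ψ s| + |t * s| := abs_sub _ _
      _ ≤ |ψ 0| + |ψ S| + |t| * S := add_le_add hψs hts
      _ ≤ ρ * s + (|ψ 0| + |ψ S| + |t| * S) := le_add_of_nonneg_left (by positivity)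

theorem tendstoUniformlyOn_div_max_sub_mul {ψ : ℝ → ℝ} {t : ℝ}
    (hmono : MonotoneOn ψ (Ici 0)) (hlim : Tendsto (fun s => ψ s / s) atTop (𝓝 t)) (c C : ℝ) :
    TendstoUniformlyOn (fun L z => ψ (max 0 (c - L * z)) / L) (fun z => t * max 0 (-z))
      atTop (Ici (-C)) := by
  rw [Metric.tendstoUniformlyOn_iff]
  intro η hη
  set ρ := η / (2 * (|C| + 1))
  have hρ : 0 < ρ := by positivity
  have hρC : ρ * |C| < η / 2 := by
    rw [div_mul_eq_mul_div, div_lt_div_iff₀ (by positivity) (by norm_num)]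
    nlinarith [abs_nonneg C]
  obtain ⟨K, hK⟩ := exists_abs_sub_mul_le_of_tendsto_div hmono hlim hρ
  filter_upwards [eventually_gt_atTop 0,
    eventually_gt_atTop (2 * (ρ * |c| + K + |t| * |c|) / η)] with L hL hLbig z (hz : -C ≤ z)
  set s := max 0 (c - L * z) with hs
  have hs0 : 0 ≤ s := le_max_left _ _
  have hsle : s ≤ |c| + L * |C| := by
    refine max_le (by positivity) ?_
    linarith [le_abs_self c, mul_le_mul_of_nonneg_left hz hL.le,
      mul_le_mul_of_nonneg_left (le_abs_self C) hL.le]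
  have hsdiff : |s - L * max 0 (-z)| ≤ |c| := by
    rw [hs, mul_max_of_nonneg _ _ hL.le, mul_zero, max_comm, max_comm 0]
    simpa using abs_max_sub_max_le_abs (c - L * z) (L * -z) 0
  have hbound : |ψ s - t * (L * max 0 (-z))| ≤ ρ * (|c| + L * |C|) + K + |t| * |c| :=
    calc |ψ s - t * (L * max 0 (-z))| = |(ψ s - t * s) + t * (s - L * max 0 (-z))| := by ring_nf
      _ ≤ |ψ s - t * s| + |t| * |s - L * max 0 (-z)| := by
          rw [← abs_mul]; exact abs_add_le _ _
      _ ≤ ρ * (|c| + L * |C|) + K + |t| * |c| := by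
          gcongr
          exact (hK s hs0).trans (by gcongr)
  have hLbig' : ρ * |c| + K + |t| * |c| < η * L / 2 := by
    rw [div_lt_iff₀ hη] at hLbig; linarith
  rw [Real.dist_eq, show t * max 0 (-z) - ψ s / L = -((ψ s - t * (L * max 0 (-z))) / L) by
    field_simp; ring, abs_neg, abs_div, abs_of_pos hL, div_lt_iff₀ hL]
  nlinarith

lemma monotone_neg_log_comp_mul_exp_neg {Φ : ℝ → ℝ} (hpos : ∀ u : ℝ, 0 < u → 0 < Φ u)
    (hmono : MonotoneOn Φ (Ioi 0)) {κ : ℝ} (hκ : 0 < κ) :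
    Monotone fun s => -log (Φ (κ * exp (-s))) := by
  intro a b hab
  have hpos' : ∀ s, 0 < κ * exp (-s) := fun s => mul_pos hκ (exp_pos _)
  have : κ * exp (-b) ≤ κ * exp (-a) := by gcongr
  exact neg_le_neg (log_le_log (hpos _ (hpos' b)) (hmono (hpos' b) (hpos' a) this))

lemma tendsto_neg_log_comp_mul_exp_neg_div {Φ : ℝ → ℝ} {t : ℝ}
    (hlim : Tendsto (fun u => log (Φ u) / log u) (𝓝[>] 0) (𝓝 t)) {κ : ℝ} (hκ : 0 < κ) :
    Tendsto (fun s => -log (Φ (κ * exp (-s))) / s) atTop (𝓝 t) := by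
  have hu : Tendsto (fun s => κ * exp (-s)) atTop (𝓝[>] 0) := by
    refine tendsto_nhdsWithin_iff.mpr ⟨?_, Eventually.of_forall fun s => mul_pos hκ (exp_pos _)⟩
    simpa using tendsto_exp_neg_atTop_nhds_zero.const_mul κ
  have hratio : Tendsto (fun s => log (κ * exp (-s)) / -s) atTop (𝓝 1) := by
    have : Tendsto (fun s : ℝ => 1 - log κ / s) atTop (𝓝 (1 - 0)) :=
      tendsto_const_nhds.sub (tendsto_const_nhds.div_atTop tendsto_id)
    rw [sub_zero] at this
    refine this.congr' ?_
    filter_upwards [eventually_gt_atTop 0] with s hs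
    rw [log_mul hκ.ne' (exp_pos _).ne', log_exp]
    field_simp
    ring
  have hprod := (hlim.comp hu).mul hratio
  rw [mul_one] at hprod
  refine hprod.congr' ?_
  filter_upwards [eventually_gt_atTop (max 0 (log κ))] with s hs
  have hlog : log (κ * exp (-s)) ≠ 0 := by
    rw [log_mul hκ.ne' (exp_pos _).ne', log_exp]
    linarith [le_max_right 0 (log κ)]
  have hs0 : s ≠ 0 := by linarith [le_max_left 0 (log κ)]
  simp only [Function.comp]
  field_simp

lemma rpow_neg_min_sub_div_add_log_div {ε : ℝ} (hε0 : 0 < ε) (hε1 : ε < 1) {κ : ℝ} (hκ : 0 < κ)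
    (c z : ℝ) :
    ε ^ (-(min 0 (z - c / |log ε|) + log κ / |log ε|)) = κ * exp (-max 0 (c - |log ε| * z)) := by
  have hlog : log ε < 0 := log_neg hε0 hε1
  set L := |log ε| with hL
  have hLpos : 0 < L := abs_pos.mpr hlog.ne
  have hmin : L * min 0 (z - c / L) = -max 0 (c - L * z) := by
    rw [mul_min_of_nonneg _ _ hLpos.le, ← min_neg_neg]
    congr 1
    · simp
    · field_simp; ring
  rw [rpow_def_of_pos hε0, show log ε = -L by rw [hL, abs_of_neg hlog, neg_neg],
    show -L * -(min 0 (z - c / L) + log κ / L) = log κ + L * min 0 (z - c / L) by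
      field_simp; ring, hmin, exp_add, exp_log hκ]

lemma exists_Ioo_forall_of_eventually_nhdsGT {P : ℝ → Prop} (h : ∀ᶠ ε in 𝓝[>] 0, P ε) :
    ∃ ε₀ ∈ Ioo (0 : ℝ) 1, ∀ ε ∈ Ioo 0 ε₀, P ε := by
  obtain ⟨u, hu, hsub⟩ := mem_nhdsGT_iff_exists_Ioo_subset.mp h
  refine ⟨min u (1 / 2), ⟨lt_min hu (by norm_num), by linarith [min_le_right u (1 / 2)]⟩,
    fun ε hε => hsub ⟨hε.1, hε.2.trans_le (min_le_left _ _)⟩⟩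

/-- Lemma 3.10 (one-sided version): if `Φ : (0,∞) → (0,1]` is nondecreasing with tail
exponent `lim_{u→0} log Φ(u)/log u = t_* > 0`, then with
`ζ_ε(z) = min{0, z − c/|log ε|} + log κ/|log ε|` and `H⁻(z) = min{t_* z, 0}`, the
quantity `(1/|log ε|)·log Φ(ε^{−ζ_ε(z)})` converges to `H⁻(z)` uniformly on `z ≥ −C`. -/
theorem stmt15 (Φ : ℝ → ℝ) (hrange : ∀ u : ℝ, 0 < u → Φ u ∈ Ioc (0 : ℝ) 1)
    (hmono : MonotoneOn Φ (Ioi 0))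
    (tstar : ℝ) (htstar : 0 < tstar)
    (hlim : Tendsto (fun u => Real.log (Φ u) / Real.log u)
      (nhdsWithin 0 (Ioi 0)) (nhds tstar))
    (c κ : ℝ) (hκ : 0 < κ) :
    ∀ C > (0 : ℝ), ∀ η > (0 : ℝ), ∃ ε₀ ∈ Ioo (0 : ℝ) 1, ∀ ε ∈ Ioo (0 : ℝ) ε₀,
      ∀ z : ℝ, -C ≤ z →
        |(1 / |Real.log ε|) *
            Real.log (Φ (ε ^ (-(min 0 (z - c / |Real.log ε|) +
              Real.log κ / |Real.log ε|)))) -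
          min (tstar * z) 0| < η := by
  intro C _ η hη
  have hψ := tendstoUniformlyOn_div_max_sub_mul
    ((monotone_neg_log_comp_mul_exp_neg (fun u hu => (hrange u hu).1) hmono hκ).monotoneOn _)
    (tendsto_neg_log_comp_mul_exp_neg_div hlim hκ) c C
  have hL : Tendsto (fun ε => |log ε|) (𝓝[>] 0) atTop :=
    tendsto_abs_atBot_atTop.comp tendsto_log_nhdsGT_zero
  apply exists_Ioo_forall_of_eventually_nhdsGT
  filter_upwards [hL.eventually (Metric.tendstoUniformlyOn_iff.mp hψ η hη),
    Ioo_mem_nhdsGT one_pos] with ε hε ⟨hε0, hε1⟩ z hz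
  have hmin : min (tstar * z) 0 = -(tstar * max 0 (-z)) := by
    rw [mul_max_of_nonneg _ _ htstar.le, ← min_neg_neg]
    simp [min_comm]
  rw [rpow_neg_min_sub_div_add_log_div hε0 hε1 hκ, hmin]
  convert hε z hz using 1
  rw [Real.dist_eq]
  ring_nf
end

section
/- Let F(ω,x) = (Sω, f_ω(x)) be a skew product with monotone fibre maps, and define σ^±(ω,x) := lim_{ε→0} log Σ^±_ε(ω,x)/log ε where Σ^±_ε(ω,x) = m²(U_ε(ω,x) ∩ B^±)/m²(U_ε(ω,x)) and U_ε is the ε-square around (ω,x). Assume S is locally bi-Lipschitz at ω with S-image neighborhoods comparable, and the fibre maps are bi-Lipschitz. Then whenever the limits defining σ^±(F(ω,x)) and σ^±(ω,x) exist, σ^±(F(ω,x)) = σ^±(ω,x). -/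
open MeasureTheory Set Filter

/-- The ε-square around a point of `ℝ²`. -/
def epsSquare (ε : ℝ) (p : ℝ × ℝ) : Set (ℝ × ℝ) :=
  Icc (p.1 - ε) (p.1 + ε) ×ˢ Icc (p.2 - ε) (p.2 + ε)

/-- Relative measure of the basin `B` in the ε-square around `p`. -/
noncomputable def SigmaFrac (B : Set (ℝ × ℝ)) (ε : ℝ) (p : ℝ × ℝ) : ℝ :=
  (volume (epsSquare ε p ∩ B)).toReal / (volume (epsSquare ε p)).toReal

/-!
Since `F⁻¹ B = B`, the map `F` carries `U_ε(p) ∩ B` into `U_{Kε}(F p) ∩ B` and onto a superset of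
`U_{ε/K}(F p) ∩ B`, distorting areas by at most `K`. Hence each of the basin fractions at `p` and
at `F p` is bounded by `K³` times the other one at the scale `K ε`. A constant factor and a
rescaling of `ε` change `log Σ_ε / log ε` only by `O(1 / |log ε|)`, so the two exponents agree.
A fraction vanishing near `0` forces the other one to vanish as well, and both exponents are `0`.
-/

open Topology Real

def HasLogScalingExponent (u : ℝ → ℝ) (s : ℝ) : Prop :=
  Tendsto (fun ε => log (u ε) / log ε) (𝓝[>] 0) (𝓝 s)

theorem tendsto_inv_log_nhdsGT_zero : Tendsto (fun ε => (log ε)⁻¹) (𝓝[>] 0) (𝓝 0) :=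
  tendsto_log_nhdsGT_zero.inv_tendsto_atBot

theorem tendsto_const_mul_nhdsGT_zero {a : ℝ} (ha : 0 < a) :
    Tendsto (fun ε => a * ε) (𝓝[>] 0) (𝓝[>] 0) :=
  tendsto_iff_comap.2 (comap_mulLeft_nhdsGT_zero ha).ge

namespace HasLogScalingExponent

variable {u v : ℝ → ℝ} {s t : ℝ}

-- `log 0 = 0`, so a vanishing function has exponent `0` rather than `∞`.
theorem eq_zero_of_eventuallyEq_zero (hu : HasLogScalingExponent u s)
    (h : u =ᶠ[𝓝[>] 0] 0) : s = 0 :=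
  tendsto_nhds_unique hu <| tendsto_const_nhds.congr' <| by
    filter_upwards [h] with ε hε
    simp [hε]

theorem comp_const_mul (hu : HasLogScalingExponent u s) {a : ℝ} (ha : 0 < a) :
    HasLogScalingExponent (fun ε => u (a * ε)) s := by
  have hratio : Tendsto (fun ε => log a * (log ε)⁻¹ + 1) (𝓝[>] 0) (𝓝 1) := by
    simpa using (tendsto_inv_log_nhdsGT_zero.const_mul (log a)).add_const 1
  refine (by simpa using (hu.comp (tendsto_const_mul_nhdsGT_zero ha)).mul hratio :
    Tendsto _ _ (𝓝 s)).congr' ?_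
  filter_upwards [Ioo_mem_nhdsGT (show (0 : ℝ) < min 1 a⁻¹ by positivity)] with ε hε
  have hε1 : ε < 1 := hε.2.trans_le (min_le_left _ _)
  have haε : a * ε < 1 := by
    have := mul_lt_mul_of_pos_left (hε.2.trans_le (min_le_right _ _)) ha
    rwa [mul_inv_cancel₀ ha.ne'] at this
  have hlogε : log ε ≠ 0 := (log_neg hε.1 hε1).ne
  have hlogaε : log (a * ε) ≠ 0 := (log_neg (mul_pos ha hε.1) haε).ne
  have hsplit : log a * (log ε)⁻¹ + 1 = log (a * ε) / log ε := by
    rw [log_mul ha.ne' hε.1.ne']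
    field_simp
  simp only [hsplit, div_mul_div_cancel₀ hlogaε]

theorem const_mul (hu : HasLogScalingExponent u s) {C : ℝ} (hC : C ≠ 0)
    (hu0 : ∀ᶠ ε in 𝓝[>] 0, u ε ≠ 0) : HasLogScalingExponent (fun ε => C * u ε) s := by
  refine (by simpa using (tendsto_inv_log_nhdsGT_zero.const_mul (log C)).add hu :
    Tendsto _ _ (𝓝 s)).congr' ?_
  filter_upwards [hu0] with ε hε
  rw [log_mul hC hε, add_div, div_eq_mul_inv (log C)]

-- Dividing by `log ε < 0` reverses the inequality between the logarithms.
theorem le_of_eventually_le (hu : HasLogScalingExponent u s) (hv : HasLogScalingExponent v t)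
    (hu0 : ∀ᶠ ε in 𝓝[>] 0, 0 < u ε) (huv : u ≤ᶠ[𝓝[>] 0] v) : t ≤ s := by
  refine le_of_tendsto_of_tendsto hv hu ?_
  filter_upwards [hu0, huv, Ioo_mem_nhdsGT one_pos] with ε hε hεv hε1
  exact div_le_div_of_nonpos_of_le (log_neg hε1.1 hε1.2).le (log_le_log hε hεv)

theorem le_of_eventually_le_const_mul_comp (hu : HasLogScalingExponent u s)
    (hv : HasLogScalingExponent v t) {a C : ℝ} (ha : 0 < a) (hC : 0 < C)
    (hu0 : ∀ᶠ ε in 𝓝[>] 0, 0 < u ε) (huv : ∀ᶠ ε in 𝓝[>] 0, u ε ≤ C * v (a * ε)) : t ≤ s := by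
  have hv0 : ∀ᶠ ε in 𝓝[>] 0, v (a * ε) ≠ 0 := by
    filter_upwards [hu0, huv] with ε hε hεv
    exact (pos_of_mul_pos_right (hε.trans_le hεv) hC.le).ne'
  exact hu.le_of_eventually_le ((hv.comp_const_mul ha).const_mul hC.ne' hv0) hu0 huv

end HasLogScalingExponent

theorem not_eventually_pos_of_le_const_mul_comp {u v : ℝ → ℝ} {a C : ℝ} (ha : 0 < a)
    (huv : ∀ᶠ ε in 𝓝[>] 0, u ε ≤ C * v (a * ε)) (hv : ∀ᶠ ε in 𝓝[>] 0, v ε = 0) :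
    ¬∀ᶠ ε in 𝓝[>] 0, 0 < u ε := fun hu => by
  obtain ⟨ε, hε, hεv, hv0⟩ :=
    (hu.and (huv.and (eventually_nhdsGT_zero_mul_left ha hv))).exists
  rw [hv0, mul_zero] at hεv
  exact hε.not_ge hεv

section Squares

variable {B : Set (ℝ × ℝ)} {p q : ℝ × ℝ} {ε δ K : ℝ}

theorem epsSquare_mono (h : ε ≤ δ) : epsSquare ε p ⊆ epsSquare δ p :=
  prod_mono (Icc_subset_Icc (by linarith) (by linarith)) (Icc_subset_Icc (by linarith) (by linarith))

theorem volume_epsSquare_toReal (hε : 0 ≤ ε) : (volume (epsSquare ε p)).toReal = (2 * ε) ^ 2 := by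
  rw [epsSquare, Measure.volume_eq_prod, Measure.prod_prod, Real.volume_Icc, Real.volume_Icc,
    ENNReal.toReal_mul, ENNReal.toReal_ofReal (by linarith), ENNReal.toReal_ofReal (by linarith)]
  ring

theorem volume_epsSquare_inter_ne_top : volume (epsSquare ε p ∩ B) ≠ ⊤ :=
  (measure_lt_top_mono inter_subset_left
    ((isCompact_Icc.prod isCompact_Icc).measure_lt_top)).ne

theorem sigmaFrac_eq (hε : 0 ≤ ε) :
    SigmaFrac B ε p = (volume (epsSquare ε p ∩ B)).toReal / (2 * ε) ^ 2 := by
  rw [SigmaFrac, volume_epsSquare_toReal hε]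

theorem sigmaFrac_eventually_pos_or_eventually_eq_zero (B : Set (ℝ × ℝ)) (p : ℝ × ℝ) :
    (∀ᶠ ε in 𝓝[>] 0, 0 < SigmaFrac B ε p) ∨ ∀ᶠ ε in 𝓝[>] 0, SigmaFrac B ε p = 0 := by
  by_cases hnull : ∃ ε₁ > 0, volume (epsSquare ε₁ p ∩ B) = 0
  · obtain ⟨ε₁, hε₁, hε₁B⟩ := hnull
    refine Or.inr ?_
    filter_upwards [Ioo_mem_nhdsGT hε₁] with ε hε
    have : volume (epsSquare ε p ∩ B) = 0 :=
      measure_mono_null (inter_subset_inter_left B (epsSquare_mono hε.2.le)) hε₁B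
    simp [SigmaFrac, this]
  · refine Or.inl ?_
    filter_upwards [self_mem_nhdsWithin] with ε (hε : 0 < ε)
    rw [sigmaFrac_eq hε.le]
    have := ENNReal.toReal_pos (fun h => hnull ⟨ε, hε, h⟩) volume_epsSquare_inter_ne_top
    positivity

theorem sigmaFrac_le_of_volume_le (hK : 0 < K) (hδ : 0 < δ)
    (h : volume (epsSquare δ q ∩ B) ≤ ENNReal.ofReal K * volume (epsSquare (K * δ) p ∩ B)) :
    SigmaFrac B δ q ≤ K ^ 3 * SigmaFrac B (K * δ) p := by
  have hreal := ENNReal.toReal_mono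
    (ENNReal.mul_ne_top ENNReal.ofReal_ne_top volume_epsSquare_inter_ne_top) h
  rw [ENNReal.toReal_mul, ENNReal.toReal_ofReal hK.le] at hreal
  rw [sigmaFrac_eq hδ.le, sigmaFrac_eq (by positivity), div_le_iff₀ (by positivity)]
  calc (volume (epsSquare δ q ∩ B)).toReal
      ≤ K * (volume (epsSquare (K * δ) p ∩ B)).toReal := hreal
    _ = K ^ 3 * ((volume (epsSquare (K * δ) p ∩ B)).toReal / (2 * (K * δ)) ^ 2) * (2 * δ) ^ 2 := by
      field_simp

end Squares

section Invariance

theorem image_inter_of_preimage_eq {α : Type*} {F : α → α} {B : Set α} (hB : F ⁻¹' B = B)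
    (V : Set α) : F '' (V ∩ B) = F '' V ∩ B := by
  rw [← image_inter_preimage, hB]

variable {α : Type*} [MeasurableSpace α] (μ : Measure α) {F : α → α} {B U V : Set α}
  {c : ENNReal}

theorem measure_inter_le_of_subset_image (hB : F ⁻¹' B = B) (hU : U ⊆ F '' V)
    (hF : μ (F '' (V ∩ B)) ≤ c * μ (V ∩ B)) : μ (U ∩ B) ≤ c * μ (V ∩ B) := by
  refine le_trans (measure_mono ?_) hF
  rw [image_inter_of_preimage_eq hB]
  exact inter_subset_inter_left B hU

theorem measure_inter_le_of_image_subset (hB : F ⁻¹' B = B) (hV : F '' V ⊆ U)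
    (hF : μ (V ∩ B) ≤ c * μ (F '' (V ∩ B))) : μ (V ∩ B) ≤ c * μ (U ∩ B) := by
  refine hF.trans (mul_le_mul_right (measure_mono ?_) c)
  rw [image_inter_of_preimage_eq hB]
  exact inter_subset_inter_left B hV

end Invariance

theorem stmt19_general (F : ℝ × ℝ → ℝ × ℝ) (B : Set (ℝ × ℝ))
    (hBinv : F ⁻¹' B = B)
    (p : ℝ × ℝ) (K ε₀ : ℝ) (hK : 1 ≤ K) (hε₀ : 0 < ε₀)
    (hsand : ∀ ε ∈ Ioo (0 : ℝ) ε₀,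
      epsSquare (ε / K) (F p) ⊆ F '' epsSquare ε p ∧ F '' epsSquare ε p ⊆ epsSquare (K * ε) (F p))
    (harea : ∀ A : Set (ℝ × ℝ),
      volume (F '' A) ≤ ENNReal.ofReal K * volume A ∧
      volume A ≤ ENNReal.ofReal K * volume (F '' A))
    (s s' : ℝ)
    (hs : Tendsto (fun ε => Real.log (SigmaFrac B ε p) / Real.log ε)
      (nhdsWithin 0 (Ioi 0)) (nhds s))
    (hs' : Tendsto (fun ε => Real.log (SigmaFrac B ε (F p)) / Real.log ε)
      (nhdsWithin 0 (Ioi 0)) (nhds s')) :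
    s' = s := by
  have hσ : HasLogScalingExponent (SigmaFrac B · p) s := hs
  have hσ' : HasLogScalingExponent (SigmaFrac B · (F p)) s' := hs'
  have hK0 : 0 < K := one_pos.trans_le hK
  have hsmall : ∀ᶠ ε in 𝓝[>] (0 : ℝ), ε ∈ Ioo 0 ε₀ := Ioo_mem_nhdsGT hε₀
  have hF : ∀ᶠ δ in 𝓝[>] 0, SigmaFrac B δ (F p) ≤ K ^ 3 * SigmaFrac B (K * δ) p := by
    filter_upwards [self_mem_nhdsWithin, eventually_nhdsGT_zero_mul_left hK0 hsmall]
      with δ (hδ : 0 < δ) hKδ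
    have hsub := (hsand _ hKδ).1
    rw [mul_div_cancel_left₀ δ hK0.ne'] at hsub
    exact sigmaFrac_le_of_volume_le hK0 hδ
      (measure_inter_le_of_subset_image volume hBinv hsub (harea _).1)
  have hp : ∀ᶠ ε in 𝓝[>] 0, SigmaFrac B ε p ≤ K ^ 3 * SigmaFrac B (K * ε) (F p) := by
    filter_upwards [hsmall] with ε hε
    exact sigmaFrac_le_of_volume_le hK0 hε.1
      (measure_inter_le_of_image_subset volume hBinv (hsand ε hε).2 (harea _).2)
  rcases sigmaFrac_eventually_pos_or_eventually_eq_zero B p with hpos | hzero <;>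
    rcases sigmaFrac_eventually_pos_or_eventually_eq_zero B (F p) with hFpos | hFzero
  · exact le_antisymm (hσ.le_of_eventually_le_const_mul_comp hσ' hK0 (by positivity) hpos hp)
      (hσ'.le_of_eventually_le_const_mul_comp hσ hK0 (by positivity) hFpos hF)
  · exact absurd hpos (not_eventually_pos_of_le_const_mul_comp hK0 hp hFzero)
  · exact absurd hFpos (not_eventually_pos_of_le_const_mul_comp hK0 hF hzero)
  · rw [hσ.eq_zero_of_eventuallyEq_zero hzero, hσ'.eq_zero_of_eventuallyEq_zero hFzero]

/-- Invariance of the local stability exponents under `F`: if `F` is injective with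
`F⁻¹B = B`, maps ε-squares around `p` into/onto comparable squares around `F p` and
distorts areas by a bounded factor, then the scaling exponents
`σ(p) = lim log Σ_ε(p)/log ε` at `p` and at `F p` coincide (whenever both exist). -/
theorem stmt19 (F : ℝ × ℝ → ℝ × ℝ) (B : Set (ℝ × ℝ))
    (hinj : Function.Injective F) (hBinv : F ⁻¹' B = B)
    (p : ℝ × ℝ) (K ε₀ : ℝ) (hK : 1 ≤ K) (hε₀ : 0 < ε₀)
    (hsand : ∀ ε ∈ Ioo (0 : ℝ) ε₀,
      epsSquare (ε / K) (F p) ⊆ F '' epsSquare ε p ∧ F '' epsSquare ε p ⊆ epsSquare (K * ε) (F p))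
    (harea : ∀ A : Set (ℝ × ℝ),
      volume (F '' A) ≤ ENNReal.ofReal K * volume A ∧
      volume A ≤ ENNReal.ofReal K * volume (F '' A))
    (s s' : ℝ)
    (hs : Tendsto (fun ε => Real.log (SigmaFrac B ε p) / Real.log ε)
      (nhdsWithin 0 (Ioi 0)) (nhds s))
    (hs' : Tendsto (fun ε => Real.log (SigmaFrac B ε (F p)) / Real.log ε)
      (nhdsWithin 0 (Ioi 0)) (nhds s')) :
    s' = s :=
  stmt19_general F B hBinv p K ε₀ hK hε₀ hsand harea s s' hs hs'
end
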